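/- Let nmExt : {0,1}^n × {0,1}^d → {0,1} be any function, let X = {x_1,…,x_K} ⊆ {0,1}^n be a subset of size K = 2^k, and for each seed s let w^{(s)} = (nmExt(x_i,s))_{i∈[K]} ∈ {0,1}^K. Set D = 2^d. Suppose there exist D/4 pairwise disjoint pairs of seeds (s_1,s'_1),…,(s_{D/4},s'_{D/4}) with s_j ≠ s'_j such that dist(w^{(s_j)}, w^{(s'_j)}) < 1/2 − 2ε for every j ∈ [D/4]. Then there exists an adversarial function A : {0,1}^d → {0,1}^d (with no fixed points) such that, for X the uniform random variable on the set X, dist_TV( (nmExt(X,U_d), nmExt(X,A(U_d)), U_d), (U_1, nmExt(X,A(U_d)), U_d) ) > ε; in particular nmExt is not a (k,ε)-non-malleable extractor. -/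

import Mathlib

/-!
The adversary swaps the two seeds of every pair and flips all bits of every other seed, so it has
no fixed points. Distinguish with the event "the two output bits agree and the seed lies in one of
the pairs". In the ideal distribution the first bit is an independent coin and the pairs cover
half of the seeds, so the event has probability `1/4`. In the real distribution the seed is swapped
with its partner, and the evaluation vectors of the two are `(1/2 - 2ε)`-close, so the bits agree
on more than a `1/2 + 2ε` fraction of the source: the event has probability more than `1/4 + ε`.
-/

open Finset

/-- Total variation distance between two distributions on a finite type,
defined as the supremum over events of the difference of probabilities. -/
noncomputable def tvDist {Ω : Type*} [Fintype Ω] (p q : Ω → ℝ) : ℝ :=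
  ⨆ S : Finset Ω, |∑ ω ∈ S, p ω - ∑ ω ∈ S, q ω|

/-- Distribution of `f a` when `a` is drawn uniformly from the finite set `A`. -/
noncomputable def unifPush {α Ω : Type*} [DecidableEq Ω] (A : Finset α) (f : α → Ω) :
    Ω → ℝ :=
  fun ω => ((A.filter fun a => f a = ω).card : ℝ) / (A.card : ℝ)

/-- An adversarial function: a map on seeds with no fixed points. -/
def Adversarial {d : ℕ} (A : (Fin d → Bool) → (Fin d → Bool)) : Prop :=
  ∀ s, A s ≠ s

/-- Distribution of the tuple `(nmExt(X,U_d), nmExt(X,A(U_d)), U_d)` for `X` uniform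
on the finset `X` and `U_d` an independent uniform seed. -/
noncomputable def realDist {n d : ℕ} (nmExt : (Fin n → Bool) → (Fin d → Bool) → Bool)
    (X : Finset (Fin n → Bool)) (A : (Fin d → Bool) → (Fin d → Bool)) :
    Bool × Bool × (Fin d → Bool) → ℝ :=
  unifPush (X ×ˢ (Finset.univ : Finset (Fin d → Bool)))
    (fun p => (nmExt p.1 p.2, nmExt p.1 (A p.2), p.2))

/-- Distribution of the tuple `(U_1, nmExt(X,A(U_d)), U_d)`, with `U_1` a uniform bit
independent of `X` and `U_d`. -/
noncomputable def idealDist {n d : ℕ} (nmExt : (Fin n → Bool) → (Fin d → Bool) → Bool)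
    (X : Finset (Fin n → Bool)) (A : (Fin d → Bool) → (Fin d → Bool)) :
    Bool × Bool × (Fin d → Bool) → ℝ :=
  unifPush ((Finset.univ : Finset Bool) ×ˢ X ×ˢ (Finset.univ : Finset (Fin d → Bool)))
    (fun p => (p.1, nmExt p.2.1 (A p.2.2), p.2.2))

/-- `nmExt` is a `(k,ε)`-non-malleable extractor: for every flat `(n,k)`-source `X`
and every adversarial function `A`, the real and ideal distributions are `ε`-close
in total variation distance. -/
def IsNonMalleableExtractor (n k d : ℕ) (ε : ℝ)
    (nmExt : (Fin n → Bool) → (Fin d → Bool) → Bool) : Prop :=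
  ∀ X : Finset (Fin n → Bool), X.card = 2 ^ k →
    ∀ A : (Fin d → Bool) → (Fin d → Bool), Adversarial A →
      tvDist (realDist nmExt X A) (idealDist nmExt X A) ≤ ε

lemma sum_unifPush {α Ω : Type*} [DecidableEq Ω] (A : Finset α) (f : α → Ω) (S : Finset Ω) :
    ∑ ω ∈ S, unifPush A f ω = (#{a ∈ A | f a ∈ S} : ℝ) / #A := by
  simp only [unifPush]
  rw [← sum_div, ← sum_card_fiberwise_eq_card_filter, Nat.cast_sum]

lemma abs_sum_sub_sum_le_tvDist {Ω : Type*} [Fintype Ω] (p q : Ω → ℝ) (S : Finset Ω) :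
    |∑ ω ∈ S, p ω - ∑ ω ∈ S, q ω| ≤ tvDist p q :=
  le_ciSup (f := fun T : Finset Ω => |∑ ω ∈ T, p ω - ∑ ω ∈ T, q ω|)
    (Set.finite_range _).bddAbove S

lemma mul_one_sub_lt_card_filter_eq {ι β : Type*} [Fintype ι] [Nonempty ι] [DecidableEq β]
    {v w : ι → β} {δ : ℝ} (h : (hammingDist v w : ℝ) / Fintype.card ι < δ) :
    Fintype.card ι * (1 - δ) < #{i | v i = w i} := by
  have hsplit : (#{i | v i = w i} : ℝ) + hammingDist v w = Fintype.card ι := by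
    exact_mod_cast card_filter_add_card_filter_not (s := univ) fun i => v i = w i
  rw [div_lt_iff₀ (by exact_mod_cast Fintype.card_pos)] at h
  linarith

section SwapPairs

variable {ι α : Type*} {e : ι × Bool → α}

noncomputable def swapPairs (e : ι × Bool → α) (g : α → α) : α → α :=
  Function.extend e (fun p => e (p.1, !p.2)) g

lemma swapPairs_apply (he : Function.Injective e) (g : α → α) (p : ι × Bool) :
    swapPairs e g (e p) = e (p.1, !p.2) :=
  he.extend_apply _ _ _

lemma swapPairs_ne_self (he : Function.Injective e) {g : α → α} (hg : ∀ a, g a ≠ a) (a : α) :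
    swapPairs e g a ≠ a := by
  by_cases ha : ∃ p, e p = a
  · obtain ⟨⟨i, b⟩, rfl⟩ := ha
    rw [swapPairs_apply he, he.ne_iff]
    simp
  · rw [swapPairs, Function.extend_apply' _ _ _ ha]
    exact hg a

lemma sum_image_swapPairs [Fintype ι] [DecidableEq α] {M : Type*} [AddCommMonoid M]
    (he : Function.Injective e) (g : α → α) (F : α → α → M) :
    ∑ a ∈ univ.image e, F a (swapPairs e g a) =
      ∑ i, (F (e (i, false)) (e (i, true)) + F (e (i, true)) (e (i, false))) := by
  rw [sum_image fun p _ q _ h => he h, Fintype.sum_prod_type]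
  simp [swapPairs_apply he, add_comm]

end SwapPairs

lemma comp_not_ne_self {ι : Type*} [Nonempty ι] (t : ι → Bool) : not ∘ t ≠ t := fun h =>
  Bool.not_ne_self _ (congrFun h (Classical.arbitrary ι))

def agreeOn {σ : Type*} [Fintype σ] [DecidableEq σ] (P : Finset σ) : Finset (Bool × Bool × σ) :=
  {ω | ω.1 = ω.2.1 ∧ ω.2.2 ∈ P}

section Distributions

variable {n d : ℕ} (nmExt : (Fin n → Bool) → (Fin d → Bool) → Bool)
  {X : Finset (Fin n → Bool)} (A : (Fin d → Bool) → (Fin d → Bool)) (P : Finset (Fin d → Bool))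
  {ι : Type*} [Fintype ι] {e : ι × Bool → (Fin d → Bool)}

lemma sum_agreeOn_realDist :
    ∑ ω ∈ agreeOn P, realDist nmExt X A ω =
      (∑ u ∈ P, #{a ∈ X | nmExt a u = nmExt a (A u)} : ℕ) / (#X * 2 ^ d : ℝ) := by
  have hevent : {p ∈ X ×ˢ (univ : Finset (Fin d → Bool)) |
      (nmExt p.1 p.2, nmExt p.1 (A p.2), p.2) ∈ agreeOn P} =
        {p ∈ X ×ˢ P | nmExt p.1 p.2 = nmExt p.1 (A p.2)} := by
    ext ⟨a, u⟩
    simp only [agreeOn, mem_filter, mem_product, mem_univ, true_and]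
    tauto
  rw [realDist, sum_unifPush, hevent, card_filter, sum_product_right, card_product, card_univ,
    Fintype.card_fun, Fintype.card_bool, Fintype.card_fin]
  simp only [← card_filter]
  push_cast
  rfl

lemma sum_agreeOn_idealDist (hX : X.Nonempty) :
    ∑ ω ∈ agreeOn P, idealDist nmExt X A ω = #P / (2 * 2 ^ d : ℝ) := by
  have hevent : {p ∈ (univ : Finset Bool) ×ˢ X ×ˢ (univ : Finset (Fin d → Bool)) |
      (p.1, nmExt p.2.1 (A p.2.2), p.2.2) ∈ agreeOn P} =
        (X ×ˢ P).image fun q => (nmExt q.1 (A q.2), q) := by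
    ext ⟨b, a, u⟩
    simp only [agreeOn, mem_filter, mem_product, mem_univ, true_and, mem_image, Prod.mk.injEq]
    grind
  rw [idealDist, sum_unifPush, hevent,
    card_image_of_injective _ fun q q' h => congrArg Prod.snd h, card_product, card_product,
    card_product, card_univ, card_univ, Fintype.card_fun, Fintype.card_bool, Fintype.card_fin]
  have : (#X : ℝ) ≠ 0 := by exact_mod_cast hX.card_pos.ne'
  push_cast
  field_simp

lemma sum_agreeOn_image_idealDist (hX : X.Nonempty) (he : Function.Injective e)
    (hD : 2 ^ d = 4 * Fintype.card ι) :
    ∑ ω ∈ agreeOn (univ.image e), idealDist nmExt X A ω = 1 / 4 := by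
  have hι : (Fintype.card ι : ℝ) ≠ 0 := by
    have := Nat.two_pow_pos d
    exact_mod_cast (by omega : Fintype.card ι ≠ 0)
  rw [sum_agreeOn_idealDist _ _ _ hX, card_image_of_injective _ he, card_univ,
    Fintype.card_prod, Fintype.card_bool,
    show (2 : ℝ) ^ d = 4 * Fintype.card ι by exact_mod_cast hD]
  field_simp
  push_cast
  ring

lemma quarter_add_lt_sum_agreeOn_image_realDist_swapPairs [Nonempty ι]
    (g : (Fin d → Bool) → (Fin d → Bool)) {ε : ℝ} (hX : X.Nonempty) (he : Function.Injective e)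
    (hD : 2 ^ d = 4 * Fintype.card ι)
    (hagree : ∀ i, #X * (1 / 2 + 2 * ε) <
      #{a ∈ X | nmExt a (e (i, false)) = nmExt a (e (i, true))}) :
    1 / 4 + ε < ∑ ω ∈ agreeOn (univ.image e), realDist nmExt X (swapPairs e g) ω := by
  rw [sum_agreeOn_realDist,
    sum_image_swapPairs he _ fun u v => #{a ∈ X | nmExt a u = nmExt a v}]
  simp only [eq_comm (a := nmExt _ (e (_, true))), ← two_mul]
  have hsum := sum_lt_sum_of_nonempty univ_nonempty fun i (_ : i ∈ univ) =>
    (by linarith [hagree i] : (#X : ℝ) * (1 + 4 * ε) <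
      2 * #{a ∈ X | nmExt a (e (i, false)) = nmExt a (e (i, true))})
  rw [sum_const, card_univ, nsmul_eq_mul] at hsum
  rw [lt_div_iff₀ (by have := hX.card_pos; positivity),
    show (2 : ℝ) ^ d = 4 * Fintype.card ι by exact_mod_cast hD]
  push_cast
  linarith

end Distributions

/-- If for a function `nmExt` and a source set `{x₁,…,x_K} ⊆ {0,1}^n` of size `K = 2^k`
there exist `D/4` pairwise disjoint pairs of seeds (`R` pairs with `4R = 2^d = D`,
encoded by `s, s'` with the combined map injective) whose evaluation vectors
`w⁽ˢ⁾ = (nmExt(xᵢ,s))ᵢ` are pairwise `(1/2 − 2ε)`-close, then there is an adversarial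
function `A` witnessing that `nmExt` is not a `(k,ε)`-non-malleable extractor on the
uniform source over `{x₁,…,x_K}`. -/
theorem bad_pairs_refute_nmExt (n k d : ℕ) (ε : ℝ)
    (nmExt : (Fin n → Bool) → (Fin d → Bool) → Bool)
    (x : Fin (2 ^ k) → (Fin n → Bool)) (hx : Function.Injective x)
    (R : ℕ) (hR : 4 * R = 2 ^ d)
    (s s' : Fin R → (Fin d → Bool))
    (hdisj : Function.Injective
      (fun p : Fin R × Bool => if p.2 then s' p.1 else s p.1))
    (hclose : ∀ j : Fin R,
      (hammingDist (fun i => nmExt (x i) (s j)) (fun i => nmExt (x i) (s' j)) : ℝ) /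
          ((2 : ℝ) ^ k) < 1 / 2 - 2 * ε) :
    ∃ A : (Fin d → Bool) → (Fin d → Bool), Adversarial A ∧
      tvDist (realDist nmExt (Finset.univ.image x) A)
        (idealDist nmExt (Finset.univ.image x) A) > ε := by
  have : Nonempty (Fin d) := Fin.pos_iff_nonempty.1 (Nat.pos_of_ne_zero (by rintro rfl; omega))
  have : Nonempty (Fin R) := ⟨⟨0, by have := Nat.two_pow_pos d; omega⟩⟩
  have hR' : 2 ^ d = 4 * Fintype.card (Fin R) := by rw [Fintype.card_fin, hR]
  have hX : #(univ.image x) = 2 ^ k := by simp [card_image_of_injective _ hx]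
  have hXne : (univ.image x).Nonempty := card_pos.1 (by rw [hX]; positivity)
  have hagree (j : Fin R) : (#(univ.image x) : ℝ) * (1 / 2 + 2 * ε) <
      #{a ∈ univ.image x | nmExt a (s j) = nmExt a (s' j)} := by
    have h := mul_one_sub_lt_card_filter_eq (v := fun i => nmExt (x i) (s j))
      (w := fun i => nmExt (x i) (s' j)) (δ := 1 / 2 - 2 * ε) (by simpa using hclose j)
    rw [hX, filter_image, card_image_of_injective _ hx]
    convert h using 1
    simp only [Fintype.card_fin, Nat.cast_pow, Nat.cast_ofNat]
    ring
  set e : Fin R × Bool → (Fin d → Bool) := fun p => if p.2 then s' p.1 else s p.1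
  refine ⟨swapPairs e (not ∘ ·), swapPairs_ne_self hdisj comp_not_ne_self, ?_⟩
  have hreal :=
    quarter_add_lt_sum_agreeOn_image_realDist_swapPairs nmExt (not ∘ ·) hXne hdisj hR' hagree
  have hideal := sum_agreeOn_image_idealDist nmExt (swapPairs e (not ∘ ·)) hXne hdisj hR'
  exact (by linarith : ε < _ - _).trans_le
    ((le_abs_self _).trans (abs_sum_sub_sum_le_tvDist _ _ _))
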